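/- arXiv:2410.02882 — 2 statements merged into one kernel-verified Lean document; each statement's English description precedes it below -/
import Mathlib

section
/- Let ρ, σ ∈ ℂ^{n×n} be Hermitian positive semidefinite matrices. Then (tr(√(√ρ · σ · √ρ)))² ≤ tr(ρ) · tr(σ). -/
open Matrix ComplexOrder

/-- The positive semidefinite square root of a positive semidefinite matrix, as defined in
Mathlib of December 2024 (since removed from Mathlib). -/
noncomputable def Matrix.PosSemidef.sqrt {m : Type*} [Fintype m] [DecidableEq m]
    {A : Matrix m m ℂ} (hA : A.PosSemidef) : Matrix m m ℂ :=
  hA.1.eigenvectorUnitary.1 * diagonal ((↑) ∘ (√·) ∘ hA.1.eigenvalues) *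
    (star hA.1.eigenvectorUnitary : Matrix m m ℂ)

/-!
Put `B = √σ √ρ`, so that `√ρ σ √ρ = Bᴴ B` and `tr √(√ρ σ √ρ) = ∑ √μᵢ` over the eigenvalues `μᵢ`
of `Bᴴ B`, i.e. the sum of the singular values of `B`. Diagonalising `Bᴴ B` yields a partial isometry `W` (that is, `Wᴴ W` is a
projection) with `tr (Wᴴ B) = ∑ √μᵢ`: the trace part of the polar decomposition of `B`.
Now `tr (Wᴴ B) = tr ((√σ W)ᴴ √ρ)` is a Frobenius inner product, so by Cauchy–Schwarz its square is
at most `tr (Wᴴ σ W) · tr ρ`, and `tr (Wᴴ σ W) = tr (σ W Wᴴ) ≤ tr σ` because `W Wᴴ` is a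
projection as well.
-/

namespace Matrix.PosSemidef

open scoped MatrixOrder

variable {m : Type*} [Fintype m] [DecidableEq m] {A : Matrix m m ℂ}

theorem sqrt_eq_cfcSqrt (hA : A.PosSemidef) : hA.sqrt = CFC.sqrt A := by
  rw [CFC.sqrt_eq_real_sqrt A hA.nonneg, cfcₙ_eq_cfc, hA.1.cfc_eq, IsHermitian.cfc,
    Unitary.conjStarAlgAut_apply]
  rfl

theorem isHermitian_sqrt (hA : A.PosSemidef) : hA.sqrt.IsHermitian := by
  rw [hA.sqrt_eq_cfcSqrt]
  exact (CFC.sqrt_nonneg A).posSemidef.isHermitian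

theorem sqrt_mul_self (hA : A.PosSemidef) : hA.sqrt * hA.sqrt = A := by
  rw [hA.sqrt_eq_cfcSqrt, CFC.sqrt_mul_sqrt_self A hA.nonneg]

theorem trace_sqrt (hA : A.PosSemidef) :
    hA.sqrt.trace = ∑ i, ((√(hA.1.eigenvalues i) : ℝ) : ℂ) := by
  rw [PosSemidef.sqrt, trace_mul_cycle, Unitary.coe_star_mul_self, one_mul, trace_diagonal]
  rfl

end Matrix.PosSemidef

namespace Matrix

open RCLike

variable {𝕜 : Type*} [RCLike 𝕜] {l m n : Type*} [Fintype l] [Fintype m] [Fintype n]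

theorem norm_trace_conjTranspose_mul_sq_le (M N : Matrix m n 𝕜) :
    ‖(Mᴴ * N).trace‖ ^ 2 ≤ re (Mᴴ * M).trace * re (Nᴴ * N).trace := by
  have hinner (P Q : Matrix m n 𝕜) :
      inner 𝕜 (WithLp.toLp 2 P.vec : EuclideanSpace 𝕜 (n × m)) (WithLp.toLp 2 Q.vec) =
        (Pᴴ * Q).trace := by
    rw [EuclideanSpace.inner_eq_star_dotProduct, dotProduct_comm, star_vec_dotProduct_vec]
  have hswap : (Nᴴ * M).trace = star (Mᴴ * N).trace := by
    rw [← trace_conjTranspose, conjTranspose_mul, conjTranspose_conjTranspose]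
  have hcs := inner_mul_inner_self_le (𝕜 := 𝕜) (WithLp.toLp 2 M.vec : EuclideanSpace 𝕜 (n × m))
    (WithLp.toLp 2 N.vec)
  rwa [hinner, hinner, hinner, hinner, hswap, norm_star, ← sq] at hcs

theorem isIdempotentElem_self_mul_conjTranspose {W : Matrix m n 𝕜}
    (hW : IsIdempotentElem (Wᴴ * W)) : IsIdempotentElem (W * Wᴴ) := by
  classical
  have h : (Wᴴ * W - 1) * Wᴴ = 0 := by
    rw [← mul_conjTranspose_mul_self_eq_zero, sub_mul, hW.eq, one_mul, sub_self]
  have hWP : W * (Wᴴ * W) = W := by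
    simpa [Matrix.mul_sub, sub_eq_zero] using congr_arg conjTranspose h
  rw [IsIdempotentElem, ← Matrix.mul_assoc, Matrix.mul_assoc W, hWP]

theorem trace_conjTranspose_mul_mul_le {M : Matrix m m 𝕜} (hM : M.PosSemidef)
    {W : Matrix m n 𝕜} (hW : IsIdempotentElem (Wᴴ * W)) : (Wᴴ * M * W).trace ≤ M.trace := by
  classical
  set Q := 1 - W * Wᴴ
  have hQ : Qᴴ = Q := by simp [Q]
  have hQQ : Q * Q = Q := (isIdempotentElem_self_mul_conjTranspose hW).one_sub
  have htrace : (Qᴴ * M * Q).trace = M.trace - (Wᴴ * M * W).trace := by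
    rw [hQ, trace_mul_cycle, hQQ, Matrix.sub_mul, Matrix.one_mul, trace_sub,
      ← trace_mul_cycle Wᴴ M W]
  exact sub_nonneg.mp (htrace ▸ (hM.conjTranspose_mul_mul_same Q).trace_nonneg)

theorem IsHermitian.exists_trace_conjTranspose_mul_eq_sum_sqrt_eigenvalues [DecidableEq n]
    {A : Matrix n n 𝕜} (hA : A.IsHermitian) {B : Matrix m n 𝕜} (hAB : A = Bᴴ * B) :
    ∃ W : Matrix m n 𝕜, IsIdempotentElem (Wᴴ * W) ∧
      (Wᴴ * B).trace = ∑ i, ((√(hA.eigenvalues i) : ℝ) : 𝕜) := by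
  set U : Matrix n n 𝕜 := ↑hA.eigenvectorUnitary
  set s : n → ℝ := fun i => √(hA.eigenvalues i)
  have hUAU : star U * (Bᴴ * B) * U = diagonal fun i => ((s i * s i : ℝ) : 𝕜) := by
    have hdiag := hA.conjStarAlgAut_star_eigenvectorUnitary
    rw [Unitary.conjStarAlgAut_star_apply] at hdiag
    rw [← hAB, hdiag]
    congr 1
    funext i
    simp only [Function.comp_apply, s]
    rw [Real.mul_self_sqrt ((hAB ▸ posSemidef_conjTranspose_mul_self B).eigenvalues_nonneg i)]
  -- `(s i)⁻¹ = 0` where `s i = 0`, so `C (Uᴴ Bᴴ B U) C` is the projection onto the support of `s`.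
  set C : Matrix n n 𝕜 := diagonal fun i => (((s i)⁻¹ : ℝ) : 𝕜)
  have hC : Cᴴ = C := by simp [C, diagonal_conjTranspose]
  have hCD : C * (star U * (Bᴴ * B) * U) = diagonal fun i => ((s i : ℝ) : 𝕜) := by
    simp only [hUAU, C, diagonal_mul_diagonal, ← ofReal_mul, ← mul_assoc, inv_mul_mul_self]
  refine ⟨B * U * C * star U, ?_, ?_⟩
  · have hWW : (B * U * C * star U)ᴴ * (B * U * C * star U) =
        U * (C * (star U * (Bᴴ * B) * U) * C) * star U := by
      simp only [conjTranspose_mul, hC, star_eq_conjTranspose, conjTranspose_conjTranspose,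
        Matrix.mul_assoc]
    have hE : IsIdempotentElem (C * (star U * (Bᴴ * B) * U) * C) := by
      simp only [hCD, C, IsIdempotentElem, diagonal_mul_diagonal, ← ofReal_mul, ← mul_assoc,
        mul_inv_mul_cancel]
    rw [hWW]
    simpa only [Unitary.conjStarAlgAut_apply] using
      hE.map (Unitary.conjStarAlgAut 𝕜 _ hA.eigenvectorUnitary)
  · calc ((B * U * C * star U)ᴴ * B).trace = (U * (C * (star U * (Bᴴ * B)))).trace := by
          simp only [conjTranspose_mul, hC, star_eq_conjTranspose, conjTranspose_conjTranspose,
            Matrix.mul_assoc]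
      _ = (C * (star U * (Bᴴ * B) * U)).trace := by
          rw [trace_mul_comm, Matrix.mul_assoc, Matrix.mul_assoc]
      _ = ∑ i, ((s i : ℝ) : 𝕜) := by rw [hCD, trace_diagonal]

theorem IsHermitian.sq_sum_sqrt_eigenvalues_le [DecidableEq n] {A : Matrix n n 𝕜}
    (hA : A.IsHermitian) (X : Matrix l m 𝕜) (Y : Matrix l n 𝕜)
    (hAXY : A = (Xᴴ * Y)ᴴ * (Xᴴ * Y)) :
    (∑ i, √(hA.eigenvalues i)) ^ 2 ≤ re (Xᴴ * X).trace * re (Yᴴ * Y).trace := by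
  obtain ⟨W, hW, htrace⟩ := hA.exists_trace_conjTranspose_mul_eq_sum_sqrt_eigenvalues hAXY
  have hXW : re ((X * W)ᴴ * (X * W)).trace ≤ re (Xᴴ * X).trace := by
    rw [conjTranspose_mul, Matrix.mul_assoc, ← Matrix.mul_assoc Xᴴ, ← Matrix.mul_assoc]
    exact (le_iff_re_im.mp
      (trace_conjTranspose_mul_mul_le (posSemidef_conjTranspose_mul_self X) hW)).1
  calc (∑ i, √(hA.eigenvalues i)) ^ 2 = ‖((X * W)ᴴ * Y).trace‖ ^ 2 := by
        rw [conjTranspose_mul, Matrix.mul_assoc, htrace, ← ofReal_sum, norm_ofReal,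
          abs_of_nonneg (Finset.sum_nonneg fun i _ => Real.sqrt_nonneg _)]
    _ ≤ re ((X * W)ᴴ * (X * W)).trace * re (Yᴴ * Y).trace :=
        norm_trace_conjTranspose_mul_sq_le _ _
    _ ≤ re (Xᴴ * X).trace * re (Yᴴ * Y).trace := by
        gcongr
        exact (nonneg_iff.mp (posSemidef_conjTranspose_mul_self Y).trace_nonneg).1

end Matrix

/-- Let `ρ, σ ∈ ℂ^{n×n}` be Hermitian positive semidefinite matrices.
Then `(tr √(√ρ σ √ρ))² ≤ tr ρ · tr σ`. -/
theorem sq_trace_sqrt_le_trace_mul_trace {n : ℕ}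
    (ρ σ : Matrix (Fin n) (Fin n) ℂ)
    (hρ : ρ.PosSemidef) (hσ : σ.PosSemidef)
    (h : (hρ.sqrt * σ * hρ.sqrt).PosSemidef) :
    (h.sqrt.trace) ^ 2 ≤ ρ.trace * σ.trace := by
  have hXY : hρ.sqrt * σ * hρ.sqrt = (hσ.sqrtᴴ * hρ.sqrt)ᴴ * (hσ.sqrtᴴ * hρ.sqrt) := by
    rw [conjTranspose_mul, conjTranspose_conjTranspose, hρ.isHermitian_sqrt.eq,
      hσ.isHermitian_sqrt.eq, ← Matrix.mul_assoc, Matrix.mul_assoc hρ.sqrt hσ.sqrt,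
      hσ.sqrt_mul_self]
  have key := h.1.sq_sum_sqrt_eigenvalues_le hσ.sqrt hρ.sqrt hXY
  rw [hσ.isHermitian_sqrt.eq, hρ.isHermitian_sqrt.eq, hσ.sqrt_mul_self, hρ.sqrt_mul_self] at key
  obtain ⟨r, -, hr⟩ := RCLike.nonneg_iff_exists_ofReal.mp hρ.trace_nonneg
  obtain ⟨s, -, hs⟩ := RCLike.nonneg_iff_exists_ofReal.mp hσ.trace_nonneg
  rw [← hr, ← hs, RCLike.ofReal_re, RCLike.ofReal_re, mul_comm] at key
  rw [RCLike.ofReal_eq_complex_ofReal] at hr hs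
  rw [h.trace_sqrt, ← hr, ← hs]
  exact_mod_cast key
end

section
/- Let λ ∈ ℝ, let R_z ∈ ℝ^{p×p} and R_u ∈ ℝ^{q×q} be positive definite, and let Φ_f : ℝ → ℝ^{p×m}, Φ : ℝ → ℝ^{q×m}, z : ℝ → ℝ^p, u_f : ℝ → ℝ^p be continuous. Define A(t) and b(t) as differentiable functions satisfying A′(t) = -λ A(t) + Φ_f(t)ᵀ R_z Φ_f(t) + Φ(t)ᵀ R_u Φ(t) and b′(t) = -λ b(t) + Φ_f(t)ᵀ R_z (z(t) - u_f(t)), and suppose P : ℝ → ℝ^{m×m} is differentiable with P(t) A(t) = I for all t. Then θ(t) := -P(t) b(t) satisfies, for all t, θ′(t) = -P(t) Φ_f(t)ᵀ R_z (z(t) + Φ_f(t) θ(t) - u_f(t)) - P(t) Φ(t)ᵀ R_u Φ(t) θ(t). -/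
open Matrix

attribute [local instance] Matrix.normedAddCommGroup Matrix.normedSpace

/-! Differentiating `P A = 1` gives `P' = -P A' P`. Substituting this into
`θ' = -(P' b + P b')` and cancelling `P A = 1`, the `λ`-terms coming from `A'` and from `b'`
cancel each other and the rest is the gain-update equation. -/

section MatrixCalculus

variable {𝕜 : Type*} [NontriviallyNormedField 𝕜] {l m n : Type*} {t : 𝕜}

theorem Matrix.hasDerivAt_mulVec [Fintype m] [Fintype n] {F : 𝕜 → Matrix m n 𝕜}
    {g : 𝕜 → n → 𝕜} {F' : Matrix m n 𝕜} {g' : n → 𝕜} (hF : HasDerivAt F F' t)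
    (hg : HasDerivAt g g' t) :
    HasDerivAt (fun s => F s *ᵥ g s) (F' *ᵥ g t + F t *ᵥ g') t := by
  refine hasDerivAt_pi.mpr fun i => ?_
  have hFi : ∀ j, HasDerivAt (fun s => F s i j) (F' i j) t := fun j =>
    hasDerivAt_pi.mp (hasDerivAt_pi.mp hF i) j
  have hgj : ∀ j, HasDerivAt (fun s => g s j) (g' j) t := hasDerivAt_pi.mp hg
  simpa only [mulVec, dotProduct, Pi.add_apply, Pi.mul_apply, Finset.sum_add_distrib] using
    HasDerivAt.fun_sum fun j _ => (hFi j).mul (hgj j)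

theorem Matrix.hasDerivAt_mul [Fintype l] [Fintype m] [Fintype n] {F : 𝕜 → Matrix l m 𝕜}
    {G : 𝕜 → Matrix m n 𝕜} {F' : Matrix l m 𝕜} {G' : Matrix m n 𝕜}
    (hF : HasDerivAt F F' t) (hG : HasDerivAt G G' t) :
    HasDerivAt (fun s => F s * G s) (F' * G t + F t * G') t := by
  refine hasDerivAt_pi.mpr fun i => hasDerivAt_pi.mpr fun j => ?_
  have hFi : ∀ k, HasDerivAt (fun s => F s i k) (F' i k) t := fun k =>
    hasDerivAt_pi.mp (hasDerivAt_pi.mp hF i) k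
  have hGj : ∀ k, HasDerivAt (fun s => G s k j) (G' k j) t := fun k =>
    hasDerivAt_pi.mp (hasDerivAt_pi.mp hG k) j
  simpa only [mul_apply, Matrix.add_apply, Pi.mul_apply, Finset.sum_add_distrib] using
    HasDerivAt.fun_sum fun k _ => (hFi k).mul (hGj k)

theorem Matrix.hasDerivAt_leftInverse_eq [Fintype n] [DecidableEq n]
    {A P : 𝕜 → Matrix n n 𝕜} {A' P' : Matrix n n 𝕜} (hA : HasDerivAt A A' t)
    (hP : HasDerivAt P P' t) (hPA : ∀ s, P s * A s = 1) :
    P' = -(P t * A' * P t) := by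
  have hconst : P' * A t + P t * A' = 0 :=
    (hasDerivAt_mul hP hA).unique <| by
      simpa only [hPA] using hasDerivAt_const t (1 : Matrix n n 𝕜)
  have hAP : A t * P t = 1 := mul_eq_one_comm.mp (hPA t)
  calc P' = (P' * A t + P t * A') * P t - P t * A' * P t := by
        rw [add_mul, Matrix.mul_assoc, hAP, Matrix.mul_one, add_sub_cancel_right]
    _ = -(P t * A' * P t) := by rw [hconst, Matrix.zero_mul, zero_sub]

end MatrixCalculus

theorem rcac_gain_update_general {m p q : ℕ} (lam : ℝ)
    (Rz : Matrix (Fin p) (Fin p) ℝ) (Ru : Matrix (Fin q) (Fin q) ℝ)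
    (Φf : ℝ → Matrix (Fin p) (Fin m) ℝ) (Φ : ℝ → Matrix (Fin q) (Fin m) ℝ)
    (z uf : ℝ → Fin p → ℝ)
    (A P P' : ℝ → Matrix (Fin m) (Fin m) ℝ) (b : ℝ → Fin m → ℝ)
    (hA : ∀ t, HasDerivAt A
      ((-lam) • A t + (Φf t)ᵀ * Rz * Φf t + (Φ t)ᵀ * Ru * Φ t) t)
    (hb : ∀ t, HasDerivAt b
      ((-lam) • b t + (Φf t)ᵀ *ᵥ (Rz *ᵥ (z t - uf t))) t)
    (hP : ∀ t, HasDerivAt P (P' t) t)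
    (hPA : ∀ t, P t * A t = 1) :
    ∀ t, HasDerivAt (fun s => -(P s *ᵥ b s))
      (-(P t *ᵥ ((Φf t)ᵀ *ᵥ (Rz *ᵥ (z t + Φf t *ᵥ (-(P t *ᵥ b t)) - uf t))))
        - P t *ᵥ ((Φ t)ᵀ *ᵥ (Ru *ᵥ (Φ t *ᵥ (-(P t *ᵥ b t)))))) t := by
  intro t
  have hPAv : ∀ v, P t *ᵥ (A t *ᵥ v) = v := fun v => by
    rw [mulVec_mulVec, hPA, one_mulVec]
  refine (hasDerivAt_mulVec (hP t) (hb t)).neg.congr_deriv ?_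
  rw [hasDerivAt_leftInverse_eq (hA t) (hP t) hPA]
  simp only [add_mulVec, neg_mulVec, mulVec_add, mulVec_sub, mulVec_neg, smul_mulVec,
    mulVec_smul, ← mulVec_mulVec, hPAv]
  module

/-- Gain-update equation of continuous-time RCAC: with
`A′ = -λA + Φ_fᵀ R_z Φ_f + Φᵀ R_u Φ`, `b′ = -λb + Φ_fᵀ R_z (z - u_f)`, `P A = I`, and
`θ := -P b`, one has `θ′ = -P Φ_fᵀ R_z (z + Φ_f θ - u_f) - P Φᵀ R_u Φ θ`. -/
theorem rcac_gain_update {m p q : ℕ} (lam : ℝ)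
    (Rz : Matrix (Fin p) (Fin p) ℝ) (Ru : Matrix (Fin q) (Fin q) ℝ)
    (hRz : Rz.PosDef) (hRu : Ru.PosDef)
    (Φf : ℝ → Matrix (Fin p) (Fin m) ℝ) (Φ : ℝ → Matrix (Fin q) (Fin m) ℝ)
    (z uf : ℝ → Fin p → ℝ)
    (hΦf : Continuous Φf) (hΦ : Continuous Φ) (hz : Continuous z) (huf : Continuous uf)
    (A P P' : ℝ → Matrix (Fin m) (Fin m) ℝ) (b : ℝ → Fin m → ℝ)
    (hA : ∀ t, HasDerivAt A
      ((-lam) • A t + (Φf t)ᵀ * Rz * Φf t + (Φ t)ᵀ * Ru * Φ t) t)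
    (hb : ∀ t, HasDerivAt b
      ((-lam) • b t + (Φf t)ᵀ *ᵥ (Rz *ᵥ (z t - uf t))) t)
    (hP : ∀ t, HasDerivAt P (P' t) t)
    (hPA : ∀ t, P t * A t = 1) :
    ∀ t, HasDerivAt (fun s => -(P s *ᵥ b s))
      (-(P t *ᵥ ((Φf t)ᵀ *ᵥ (Rz *ᵥ (z t + Φf t *ᵥ (-(P t *ᵥ b t)) - uf t))))
        - P t *ᵥ ((Φ t)ᵀ *ᵥ (Ru *ᵥ (Φ t *ᵥ (-(P t *ᵥ b t)))))) t :=
  rcac_gain_update_general lam Rz Ru Φf Φ z uf A P P' b hA hb hP hPA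
end
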